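/- Let k ≥ 3 and let x_j = (cos(2πj/k), sin(2πj/k)) for j ∈ ℤ (indices modulo k) be the vertices of the regular k-gon inscribed in the unit circle, with sides the closed segments [x_{j}, x_{j+1}]. Let ρ : ℝ² → ℝ² be the rotation through angle 2π/k about the origin. Fix an index i, let p be a point of the open side (x_{i−2}, x_{i−1}) (the segment without its endpoints), q a point of the open side (x_{i−1}, x_i), and r a point of the open side (x_i, x_{i+1}), and set M = [p, q] ∪ [q, r]. Then M ∩ ρ(M) ≠ ∅. -/

import Mathlib

/-!
Write `p, q, r` with parameters `a, b, c ∈ (0, 1)` along their sides. The rotation `ρ` maps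
each side onto the next one and preserves the parameter, so `ρ p` lies on the side of `q` and
`ρ q` on the side of `r`. If `a ≤ b`, the chord `ρ[p, q]` starts on the segment `[x_{i-1}, q]`
and ends beyond the corner `x_i`, so by convexity of the polygon it crosses `[p, q]`; likewise
`[q, r]` meets `ρ[q, r]` if `b ≤ c`. Otherwise `c < b < a`, and `[q, r]` and `ρ[p, q]` both cut
off the corner `x_i` with interlaced endpoints, so they cross.
-/

open Real Set

/-- Twice the signed area of the triangle `u v w`: positive iff `u, v, w` turn counterclockwise. -/
noncomputable def orient (u v w : ℝ × ℝ) : ℝ :=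
  (v.1 - u.1) * (w.2 - u.2) - (v.2 - u.2) * (w.1 - u.1)

/-- Both sides are `D • X`, where `X` is the intersection point of the lines `uv` and `wz`. -/
theorem orient_smul_sub_smul (u v w z : ℝ × ℝ) :
    orient u v z • w - orient u v w • z = orient w z u • v - orient w z v • u := by
  ext <;> simp only [orient, Prod.fst_sub, Prod.snd_sub, Prod.smul_fst, Prod.smul_snd,
    smul_eq_mul] <;> ring

theorem segment_inter_nonempty_of_orient {u v w z : ℝ × ℝ}
    (hw : orient u v w ≤ 0) (hz : 0 ≤ orient u v z) (hwz : orient u v w < orient u v z)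
    (hv : orient w z v ≤ 0) (hu : 0 ≤ orient w z u) :
    (segment ℝ u v ∩ segment ℝ w z).Nonempty := by
  set D := orient u v z - orient u v w
  have hD : 0 < D := sub_pos.2 hwz
  have hD' : orient w z u - orient w z v = D := by simp only [D, orient]; ring
  refine ⟨D⁻¹ • (orient u v z • w - orient u v w • z), ?_, ?_⟩
  · refine ⟨-orient w z v / D, orient w z u / D, div_nonneg (neg_nonneg.2 hv) hD.le,
      div_nonneg hu hD.le, by rw [← add_div, neg_add_eq_sub, hD', div_self hD.ne'], ?_⟩
    rw [orient_smul_sub_smul]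
    match_scalars <;> field_simp
  · refine ⟨orient u v z / D, -orient u v w / D, div_nonneg hz hD.le,
      div_nonneg (neg_nonneg.2 hw) hD.le, by rw [← add_div, ← sub_eq_add_neg, div_self hD.ne'], ?_⟩
    match_scalars <;> field_simp

theorem segment_inter_nonempty_of_interlace {E : Type*} [AddCommGroup E] [Module ℝ E]
    (u w z : E) {s₁ s₂ t₁ t₂ : ℝ} (hs : s₁ < s₂) (hs₂ : s₂ ≤ 1) (ht₁ : 0 ≤ t₁)
    (ht : t₁ < t₂) :
    (segment ℝ ((1 - s₁) • u + s₁ • w) ((1 - t₁) • w + t₁ • z) ∩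
      segment ℝ ((1 - s₂) • u + s₂ • w) ((1 - t₂) • w + t₂ • z)).Nonempty := by
  -- the common point divides the first chord at `t₂ (s₂ - s₁) / N` and the second one at
  -- `t₁ (s₂ - s₁) / N`
  set N := t₂ * (1 - s₁) - t₁ * (1 - s₂)
  have hN₂ : t₂ * (s₂ - s₁) ≤ N := by nlinarith
  have ht_mul : t₁ * (s₂ - s₁) ≤ t₂ * (s₂ - s₁) := by nlinarith
  have hN : 0 < N := by nlinarith
  refine ⟨(1 - t₂ * (s₂ - s₁) / N) • ((1 - s₁) • u + s₁ • w) +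
      (t₂ * (s₂ - s₁) / N) • ((1 - t₁) • w + t₁ • z),
    ⟨_, _, by rw [sub_nonneg, div_le_one hN]; exact hN₂,
      div_nonneg (mul_nonneg (by linarith) (sub_nonneg.2 hs.le)) hN.le, sub_add_cancel _ _, rfl⟩,
    ⟨1 - t₁ * (s₂ - s₁) / N, t₁ * (s₂ - s₁) / N,
      by rw [sub_nonneg, div_le_one hN]; linarith,
      div_nonneg (mul_nonneg ht₁ (sub_nonneg.2 hs.le)) hN.le, sub_add_cancel _ _, ?_⟩⟩
  match_scalars <;> field_simp <;> ring

/-- Four consecutive vertices of a convex polygon, in counterclockwise order; `w₃ = w₀` is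
allowed, as happens for a triangle. -/
def ConvexChain (w₀ w₁ w₂ w₃ : ℝ × ℝ) : Prop :=
  0 < orient w₀ w₁ w₂ ∧ 0 < orient w₁ w₂ w₃ ∧ 0 ≤ orient w₀ w₁ w₃ ∧ 0 ≤ orient w₀ w₂ w₃

theorem ConvexChain.segment_inter_nonempty {w₀ w₁ w₂ w₃ : ℝ × ℝ}
    (hw : ConvexChain w₀ w₁ w₂ w₃) {a b a' d : ℝ} (ha : a ∈ Ioc 0 1) (hb : b ∈ Ioc 0 1) (ha' : a' ∈ Icc 0 b)
    (hd : d ∈ Ioc 0 1) :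
    (segment ℝ ((1 - a) • w₀ + a • w₁) ((1 - b) • w₁ + b • w₂) ∩
      segment ℝ ((1 - a') • w₁ + a' • w₂) ((1 - d) • w₂ + d • w₃)).Nonempty := by
  obtain ⟨h₀₁₂, h₁₂₃, h₀₁₃, h₀₂₃⟩ := hw
  obtain ⟨ha₀, ha₁⟩ := ha
  obtain ⟨hb₀, hb₁⟩ := hb
  obtain ⟨ha'₀, ha'b⟩ := ha'
  obtain ⟨hd₀, hd₁⟩ := hd
  set p := (1 - a) • w₀ + a • w₁
  set q := (1 - b) • w₁ + b • w₂
  set p' := (1 - a') • w₁ + a' • w₂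
  set q' := (1 - d) • w₂ + d • w₃
  have e₁ : orient p q p' = -((1 - a) * (b - a') * orient w₀ w₁ w₂) := by
    simp only [orient, p, q, p', Prod.fst_add, Prod.snd_add, Prod.smul_fst, Prod.smul_snd,
      smul_eq_mul]; ring
  have e₂ : orient p q q' = (1 - a) * (1 - b) * (1 - d) * orient w₀ w₁ w₂ +
      (1 - a) * (1 - b) * d * orient w₀ w₁ w₃ + (1 - a) * b * d * orient w₀ w₂ w₃ +
      a * b * d * orient w₁ w₂ w₃ := by
    simp only [orient, p, q, q', Prod.fst_add, Prod.snd_add, Prod.smul_fst, Prod.smul_snd,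
      smul_eq_mul]; ring
  have e₃ : orient p' q' q = -(d * (b - a') * orient w₁ w₂ w₃) := by
    simp only [orient, p', q, q', Prod.fst_add, Prod.snd_add, Prod.smul_fst, Prod.smul_snd,
      smul_eq_mul]; ring
  have e₄ : orient p' q' p = (1 - a') * (1 - d) * (1 - a) * orient w₀ w₁ w₂ +
      (1 - a') * d * (1 - a) * orient w₀ w₁ w₃ + a' * d * (1 - a) * orient w₀ w₂ w₃ +
      a' * d * a * orient w₁ w₂ w₃ := by
    simp only [orient, p, p', q', Prod.fst_add, Prod.snd_add, Prod.smul_fst, Prod.smul_snd,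
      smul_eq_mul]; ring
  have h₁a := sub_nonneg.2 ha₁
  have h₁b := sub_nonneg.2 hb₁
  have h₁a' : 0 ≤ 1 - a' := by linarith
  have h₁d := sub_nonneg.2 hd₁
  have hba' := sub_nonneg.2 ha'b
  have hw : orient p q p' ≤ 0 := by rw [e₁]; exact neg_nonpos.2 (by positivity)
  have hz : 0 < orient p q q' := by rw [e₂]; positivity
  exact segment_inter_nonempty_of_orient hw hz.le (hw.trans_lt hz)
    (by rw [e₃]; exact neg_nonpos.2 (by positivity)) (by rw [e₄]; positivity)

theorem orient_cos_sin (α β γ : ℝ) :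
    orient (cos α, sin α) (cos β, sin β) (cos γ, sin γ) =
      4 * sin ((β - α) / 2) * sin ((γ - β) / 2) * sin ((γ - α) / 2) := by
  have h : orient (cos α, sin α) (cos β, sin β) (cos γ, sin γ) =
      sin (β - α) + sin (γ - β) - sin (γ - α) := by
    simp only [orient, sin_sub]; ring
  set u := (β - α) / 2
  set v := (γ - β) / 2
  rw [h, show (γ - α) / 2 = u + v by ring, show β - α = 2 * u by ring,
    show γ - β = 2 * v by ring, show γ - α = 2 * u + 2 * v by ring,
    sin_add, sin_add, sin_two_mul, sin_two_mul, cos_two_mul, cos_two_mul]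
  linear_combination (-4 * sin u * cos u) * sin_sq_add_cos_sq v -
    (4 * sin v * cos v) * sin_sq_add_cos_sq u

theorem convexChain_regular_polygon {θ : ℝ} (hθ : 0 < θ) (hθ₃ : 3 * θ ≤ 2 * π)
    {x : ℤ → ℝ × ℝ} (hx : ∀ j : ℤ, x j = (cos (j * θ), sin (j * θ))) (j : ℤ) :
    ConvexChain (x j) (x (j + 1)) (x (j + 2)) (x (j + 3)) := by
  have key : ∀ l m n : ℤ, orient (x (j + l)) (x (j + m)) (x (j + n)) =
      4 * sin ((m - l) * θ / 2) * sin ((n - m) * θ / 2) * sin ((n - l) * θ / 2) := by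
    intro l m n
    simp only [hx, orient_cos_sin]
    push_cast
    ring_nf
  have s₁ : 0 < sin (θ / 2) := sin_pos_of_pos_of_lt_pi (by positivity) (by linarith [pi_pos])
  have s₂ : 0 < sin θ := sin_pos_of_pos_of_lt_pi hθ (by linarith [pi_pos])
  have s₃ : 0 ≤ sin (3 * θ / 2) := sin_nonneg_of_nonneg_of_le_pi (by positivity) (by linarith)
  have h₀₁₂ := key 0 1 2
  have h₁₂₃ := key 1 2 3
  have h₀₁₃ := key 0 1 3
  have h₀₂₃ := key 0 2 3
  norm_num at h₀₁₂ h₁₂₃ h₀₁₃ h₀₂₃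
  rw [ConvexChain, h₀₁₂, h₁₂₃, h₀₁₃, h₀₂₃]
  exact ⟨by positivity, by positivity, by positivity, by positivity⟩

theorem mshape_meets_image (R : ℝ × ℝ →ₗ[ℝ] ℝ × ℝ) {v₀ v₁ v₂ v₃ v₄ : ℝ × ℝ}
    (hR₀ : R v₀ = v₁) (hR₁ : R v₁ = v₂) (hR₂ : R v₂ = v₃) (hR₃ : R v₃ = v₄)
    (hv₀ : ConvexChain v₀ v₁ v₂ v₃) (hv₁ : ConvexChain v₁ v₂ v₃ v₄) {p q r : ℝ × ℝ}
    (hp : p ∈ openSegment ℝ v₀ v₁) (hq : q ∈ openSegment ℝ v₁ v₂)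
    (hr : r ∈ openSegment ℝ v₂ v₃) :
    ((segment ℝ p q ∪ segment ℝ q r) ∩ R '' (segment ℝ p q ∪ segment ℝ q r)).Nonempty := by
  have hRseg : ∀ u v, R '' segment ℝ u v = segment ℝ (R u) (R v) :=
    image_segment ℝ R.toAffineMap
  rw [openSegment_eq_image] at hp hq hr
  obtain ⟨a, ha, rfl⟩ := hp
  obtain ⟨b, hb, rfl⟩ := hq
  obtain ⟨c, hc, rfl⟩ := hr
  simp only [image_union, hRseg, map_add, map_smul, hR₀, hR₁, hR₂, hR₃]
  rcases le_or_gt a b with hab | hba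
  · exact (hv₀.segment_inter_nonempty (Ioo_subset_Ioc_self ha) (Ioo_subset_Ioc_self hb)
      ⟨ha.1.le, hab⟩ (Ioo_subset_Ioc_self hb)).mono
      (inter_subset_inter subset_union_left subset_union_left)
  rcases le_or_gt b c with hbc | hcb
  · exact (hv₁.segment_inter_nonempty (Ioo_subset_Ioc_self hb) (Ioo_subset_Ioc_self hc)
      ⟨hb.1.le, hbc⟩ (Ioo_subset_Ioc_self hc)).mono
      (inter_subset_inter subset_union_right subset_union_right)
  · exact (segment_inter_nonempty_of_interlace _ _ _ hba ha.2.le hc.1.le hcb).mono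
      (inter_subset_inter subset_union_right subset_union_left)

/-- In the regular `k`-gon (`k ≥ 3`) inscribed in the unit circle, with `ρ` the rotation
through angle `2π/k` about the origin: an m-shaped curve `M = [p,q] ∪ [q,r]` whose
endpoints `p, q, r` lie in the open sides `(x_{i-2}, x_{i-1})`, `(x_{i-1}, x_i)` and
`(x_i, x_{i+1})` respectively must meet its rotated image `ρ(M)`. -/
theorem mshape_meets_rotation (k : ℕ) (hk : 3 ≤ k)
    (x : ℤ → ℝ × ℝ)
    (hx : ∀ j : ℤ, x j = (Real.cos (2 * Real.pi * j / k), Real.sin (2 * Real.pi * j / k)))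
    (ρ : ℝ × ℝ → ℝ × ℝ)
    (hρ : ∀ v : ℝ × ℝ, ρ v =
      (Real.cos (2 * Real.pi / k) * v.1 - Real.sin (2 * Real.pi / k) * v.2,
       Real.sin (2 * Real.pi / k) * v.1 + Real.cos (2 * Real.pi / k) * v.2))
    (i : ℤ) (p q r : ℝ × ℝ)
    (hp : p ∈ openSegment ℝ (x (i - 2)) (x (i - 1)))
    (hq : q ∈ openSegment ℝ (x (i - 1)) (x i))
    (hr : r ∈ openSegment ℝ (x i) (x (i + 1))) :
    ((segment ℝ p q ∪ segment ℝ q r) ∩ ρ '' (segment ℝ p q ∪ segment ℝ q r)).Nonempty := by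
  set θ := 2 * π / k with hθ_def
  have hk₀ : (3 : ℝ) ≤ k := by exact_mod_cast hk
  have hθ : 0 < θ := by positivity
  have hθ₃ : 3 * θ ≤ 2 * π := by
    rw [hθ_def, mul_div_assoc', div_le_iff₀ (by linarith)]; nlinarith [pi_pos]
  have hx' : ∀ j : ℤ, x j = (cos (j * θ), sin (j * θ)) := fun j => by
    rw [hx, hθ_def, mul_div_assoc', mul_comm (j : ℝ), mul_div_right_comm]
  let R : ℝ × ℝ →ₗ[ℝ] ℝ × ℝ :=
    (cos θ • LinearMap.fst ℝ ℝ ℝ - sin θ • LinearMap.snd ℝ ℝ ℝ).prod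
      (sin θ • LinearMap.fst ℝ ℝ ℝ + cos θ • LinearMap.snd ℝ ℝ ℝ)
  obtain rfl : ⇑R = ρ := funext fun v => by simp [R, hρ]
  have shift : ∀ j j', j + 1 = j' → R (x j) = x j' := by
    rintro j _ rfl
    rw [hρ, hx', hx']
    push_cast
    rw [add_mul, one_mul, cos_add, sin_add]
    congr 1 <;> ring
  have chain := convexChain_regular_polygon hθ hθ₃ hx'
  refine mshape_meets_image R (shift _ _ (by ring)) (shift _ _ (by ring)) (shift _ _ (by ring))
    (shift (i + 1) (i + 2) (by ring)) ?_ ?_ hp hq hr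
  · convert chain (i - 2) using 2 <;> ring
  · convert chain (i - 1) using 2 <;> ring
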